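/- Let δ ∈ Δ satisfy property (P1). Define δ' ∈ ℝ^{L+1} by δ'(1) := min{δ(1), ρ(1)} and δ'(ℓ) := δ(ℓ) for ℓ ∈ {2,...,L+1}. Then δ' ∈ Δ, δ' satisfies properties (P1) and (P2), and if δ' ≠ δ then δ' dominates δ. -/

import Mathlib

/-!
Lowering `δ 1` to `ρ 1 < δ 1` leaves every summand of `J` but the first unchanged; in the first the
positive part `max 0 (ρ 1 - δ 1)` stays `0` while the step `δ 2 - δ 1` grows by `δ 1 - ρ 1`, so `J`
drops by `(δ 1 - ρ 1) * w 1 ≥ 0`, strictly at `w = 1`. Since `T(δ) ≥ 2`, the position `T(δ)` is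
untouched and still witnesses `T(δ') ≥ T(δ) > 1`.
-/

open Finset

/-- The maximum revenue `r̄` among the positions `1, …, L+1`. -/
noncomputable def rbar (L : ℕ) (ρ : ℕ → ℝ) : ℝ :=
  (Finset.Icc 1 (L + 1)).sup' (Finset.nonempty_Icc.mpr (by omega)) ρ

/-- Membership in `Δ = {δ ∈ ℝ^{L+1} : 0 ≤ δ 1 ≤ ⋯ ≤ δ (L+1) ≤ r̄}`. -/
def memDelta (L : ℕ) (ρ δ : ℕ → ℝ) : Prop :=
  0 ≤ δ 1 ∧ (∀ ℓ, 1 ≤ ℓ → ℓ ≤ L → δ ℓ ≤ δ (ℓ + 1)) ∧ δ (L + 1) ≤ rbar L ρ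

/-- Membership in `W = {w ∈ ℝ^{N+1} : 0 ≤ w ℓ ≤ 1 for all ℓ, w (L+1) = 1}`. -/
def memW (N L : ℕ) (w : ℕ → ℝ) : Prop :=
  (∀ ℓ, 1 ≤ ℓ → ℓ ≤ N + 1 → 0 ≤ w ℓ ∧ w ℓ ≤ 1) ∧ w (L + 1) = 1

/-- The objective `J(w, δ)`. -/
noncomputable def Jfun (L : ℕ) (ρ w δ : ℕ → ℝ) : ℝ :=
  δ (L + 1) + ∑ ℓ ∈ Finset.Icc 1 L, (max 0 (ρ ℓ - δ ℓ) - (δ (ℓ + 1) - δ ℓ)) * w ℓ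

/-- `δ'` dominates `δ` (both thought of as elements of `Δ`). -/
def dominatesDelta (N L : ℕ) (ρ δ' δ : ℕ → ℝ) : Prop :=
  (∀ w, memW N L w → Jfun L ρ w δ' ≤ Jfun L ρ w δ) ∧
  ∃ w, memW N L w ∧ Jfun L ρ w δ' < Jfun L ρ w δ

/-- `δ` is a Pareto cut in `Δ`. -/
def paretoDelta (N L : ℕ) (ρ δ : ℕ → ℝ) : Prop :=
  ¬ ∃ δ', memDelta L ρ δ' ∧ dominatesDelta N L ρ δ' δ

/-- `T(δ) = max {ℓ ∈ {1,…,L+1} : δ ℓ ≤ ρ ℓ}`. -/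
noncomputable def Tof (L : ℕ) (ρ δ : ℕ → ℝ) : ℕ :=
  sSup {ℓ : ℕ | 1 ≤ ℓ ∧ ℓ ≤ L + 1 ∧ δ ℓ ≤ ρ ℓ}

/-- Property (P1). -/
def P1 (L : ℕ) (ρ δ : ℕ → ℝ) : Prop := 1 < Tof L ρ δ

/-- Property (P2). -/
def P2 (ρ δ : ℕ → ℝ) : Prop := δ 1 ≤ ρ 1

/-- Property (P3). -/
def P3 (L : ℕ) (ρ δ : ℕ → ℝ) : Prop :=
  ∀ ℓ, 2 ≤ ℓ → ℓ ≤ L → δ ℓ < ρ ℓ → δ ℓ = δ (ℓ + 1)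

/-- Property (P4). -/
def P4 (L : ℕ) (ρ δ : ℕ → ℝ) : Prop :=
  ∀ ℓ, Tof L ρ δ ≤ ℓ → ℓ ≤ L + 1 → δ ℓ = δ (Tof L ρ δ)

section Tof

variable {L : ℕ} {ρ δ : ℕ → ℝ}

lemma bddAbove_setOf_le_rho :
    BddAbove {ℓ : ℕ | 1 ≤ ℓ ∧ ℓ ≤ L + 1 ∧ δ ℓ ≤ ρ ℓ} :=
  ⟨L + 1, fun _ hℓ => hℓ.2.1⟩

lemma le_Tof {ℓ : ℕ} (h1 : 1 ≤ ℓ) (hL : ℓ ≤ L + 1) (hle : δ ℓ ≤ ρ ℓ) : ℓ ≤ Tof L ρ δ :=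
  le_csSup bddAbove_setOf_le_rho ⟨h1, hL, hle⟩

lemma Tof_mem_of_P1 (h : P1 L ρ δ) :
    1 ≤ Tof L ρ δ ∧ Tof L ρ δ ≤ L + 1 ∧ δ (Tof L ρ δ) ≤ ρ (Tof L ρ δ) := by
  refine Nat.sSup_mem ?_ bddAbove_setOf_le_rho
  by_contra hempty
  rw [Set.not_nonempty_iff_eq_empty] at hempty
  simp [P1, Tof, hempty] at h

lemma P1_of_eqOn {δ' : ℕ → ℝ} (h : P1 L ρ δ) (heq : Set.EqOn δ' δ (Set.Icc 2 (L + 1))) :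
    P1 L ρ δ' := by
  obtain ⟨-, hTL, hTle⟩ := Tof_mem_of_P1 h
  have hT2 : 2 ≤ Tof L ρ δ := h
  exact lt_of_lt_of_le h (le_Tof (by omega) hTL (by rwa [heq ⟨hT2, hTL⟩]))

end Tof

section LowerFirst

variable {L : ℕ} {ρ δ δ' : ℕ → ℝ}

lemma memDelta_of_eqOn_of_le_first (hL : 1 ≤ L) (hδ : memDelta L ρ δ)
    (heq : Set.EqOn δ' δ (Set.Icc 2 (L + 1))) (h0 : 0 ≤ δ' 1) (hle : δ' 1 ≤ δ 1) :
    memDelta L ρ δ' := by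
  obtain ⟨-, hmono, htop⟩ := hδ
  refine ⟨h0, fun ℓ h1 hℓ => ?_, by rwa [heq ⟨by omega, le_rfl⟩]⟩
  rcases h1.eq_or_lt with rfl | h2
  · rw [heq ⟨le_rfl, by omega⟩]
    exact hle.trans (hmono 1 le_rfl hL)
  · rw [heq ⟨h2, by omega⟩, heq ⟨by omega, by omega⟩]
    exact hmono ℓ h1 hℓ

lemma Jfun_sub_of_eqOn (hL : 1 ≤ L) (heq : Set.EqOn δ' δ (Set.Icc 2 (L + 1))) (w : ℕ → ℝ) :
    Jfun L ρ w δ' - Jfun L ρ w δ =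
      (max 0 (ρ 1 - δ' 1) - max 0 (ρ 1 - δ 1) + (δ' 1 - δ 1)) * w 1 := by
  have hsplit : Icc 1 L = insert 1 (Icc 2 L) := by
    ext x; simp only [mem_Icc, mem_insert]; omega
  have hnot : 1 ∉ Icc 2 L := by simp
  have htail : ∑ ℓ ∈ Icc 2 L, (max 0 (ρ ℓ - δ' ℓ) - (δ' (ℓ + 1) - δ' ℓ)) * w ℓ =
      ∑ ℓ ∈ Icc 2 L, (max 0 (ρ ℓ - δ ℓ) - (δ (ℓ + 1) - δ ℓ)) * w ℓ := by
    refine sum_congr rfl fun ℓ hℓ => ?_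
    rw [mem_Icc] at hℓ
    rw [heq ⟨hℓ.1, by omega⟩, heq ⟨by omega, by omega⟩]
  rw [Jfun, Jfun, hsplit, sum_insert hnot, sum_insert hnot, htail, heq ⟨by omega, le_rfl⟩,
    heq ⟨le_rfl, by omega⟩]
  ring

lemma dominatesDelta_of_lower_first (N : ℕ) (hL : 1 ≤ L)
    (heq : Set.EqOn δ' δ (Set.Icc 2 (L + 1))) (hδ'1 : δ' 1 = ρ 1) (hlt : ρ 1 < δ 1) :
    dominatesDelta N L ρ δ' δ := by
  have hJ : ∀ w, Jfun L ρ w δ' - Jfun L ρ w δ = (ρ 1 - δ 1) * w 1 := fun w => by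
    rw [Jfun_sub_of_eqOn hL heq, hδ'1, sub_self, max_self, max_eq_left (by linarith)]
    ring
  refine ⟨fun w hw => ?_, fun _ => 1, ⟨fun _ _ _ => ⟨zero_le_one, le_rfl⟩, rfl⟩, ?_⟩
  · have hw1 : 0 ≤ w 1 := (hw.1 1 le_rfl (by omega)).1
    have := hJ w
    nlinarith
  · linarith [hJ fun _ => 1]

end LowerFirst

theorem stmt17_general
    (N L : ℕ) (hL1 : 1 ≤ L)
    (ρ : ℕ → ℝ)
    (hρpos : ∀ ℓ, 1 ≤ ℓ → ℓ ≤ N + 1 → ℓ ≠ L + 1 → 0 < ρ ℓ)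
    (δ : ℕ → ℝ) (hδ : memDelta L ρ δ) (hP1 : P1 L ρ δ)
    (δ' : ℕ → ℝ)
    (hδ'1 : δ' 1 = min (δ 1) (ρ 1))
    (hδ'rest : ∀ ℓ, 2 ≤ ℓ → ℓ ≤ L + 1 → δ' ℓ = δ ℓ) :
    memDelta L ρ δ' ∧ P1 L ρ δ' ∧ P2 ρ δ' ∧
      ((∃ ℓ, 1 ≤ ℓ ∧ ℓ ≤ L + 1 ∧ δ' ℓ ≠ δ ℓ) → dominatesDelta N L ρ δ' δ) := by
  have heq : Set.EqOn δ' δ (Set.Icc 2 (L + 1)) := fun ℓ hℓ => hδ'rest ℓ hℓ.1 hℓ.2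
  have hρ1 : 0 < ρ 1 := hρpos 1 le_rfl (by omega) (by omega)
  refine ⟨memDelta_of_eqOn_of_le_first hL1 hδ heq ((le_min hδ.1 hρ1.le).trans_eq hδ'1.symm)
      (hδ'1.trans_le (min_le_left _ _)), P1_of_eqOn hP1 heq, hδ'1.trans_le (min_le_right _ _), ?_⟩
  rintro ⟨ℓ, h1, hℓ, hne⟩
  rcases le_or_gt (δ 1) (ρ 1) with hle | hlt
  · rcases h1.eq_or_lt with rfl | h2
    · exact absurd (hδ'1.trans (min_eq_left hle)) hne
    · exact absurd (heq ⟨h2, hℓ⟩) hne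
  · exact dominatesDelta_of_lower_first N hL1 heq (hδ'1.trans (min_eq_right hlt.le)) hlt

theorem stmt17
    (N L : ℕ) (hL1 : 1 ≤ L) (hLN : L ≤ N)
    (ρ : ℕ → ℝ)
    (hρpos : ∀ ℓ, 1 ≤ ℓ → ℓ ≤ N + 1 → ℓ ≠ L + 1 → 0 < ρ ℓ)
    (hρ0 : ρ (L + 1) = 0)
    (δ : ℕ → ℝ) (hδ : memDelta L ρ δ) (hP1 : P1 L ρ δ)
    (δ' : ℕ → ℝ)
    (hδ'1 : δ' 1 = min (δ 1) (ρ 1))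
    (hδ'rest : ∀ ℓ, 2 ≤ ℓ → ℓ ≤ L + 1 → δ' ℓ = δ ℓ) :
    memDelta L ρ δ' ∧ P1 L ρ δ' ∧ P2 ρ δ' ∧
      ((∃ ℓ, 1 ≤ ℓ ∧ ℓ ≤ L + 1 ∧ δ' ℓ ≠ δ ℓ) → dominatesDelta N L ρ δ' δ) :=
  stmt17_general N L hL1 ρ hρpos δ hδ hP1 δ' hδ'1 hδ'rest
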